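/- Let F = K_3 ∪ D_3, where D_3 consists of two vertex-disjoint triangles joined by a single edge. For n ≥ 15 with n ≡ 0 (mod 3), the graph D_3 ∪ ((n-6)/3)·P_3 (disjoint union of D_3 with (n-6)/3 paths on 3 vertices) is weakly (K_n, F)-saturated; hence wsat(K_n, F) ≤ 2n/3 + 3. -/

import Mathlib

open SimpleGraph Finset Filter

/-- `F` has a copy (an injective graph homomorphism image) in `G`. -/
def HasCopy {W V : Type*} (F : SimpleGraph W) (G : SimpleGraph V) : Prop :=
  ∃ f : W ↪ V, ∀ a b, F.Adj a b → G.Adj (f a) (f b)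

/-- Adding the edge `xy` to `H` creates a new copy of `F` containing `xy`. -/
def NewCopyStep {W V : Type*} (F : SimpleGraph W) (H : SimpleGraph V) (x y : V) : Prop :=
  ¬ H.Adj x y ∧
  ∃ f : W ↪ V, ∃ a b : W, F.Adj a b ∧ f a = x ∧ f b = y ∧
    ∀ c d, F.Adj c d → (H ⊔ SimpleGraph.fromEdgeSet {s(x, y)}).Adj (f c) (f d)

/-- The list `l` of edges can be added successively to `H`, each addition creating a
new copy of `F` containing the added edge. -/
def SatProcess {W V : Type*} (F : SimpleGraph W) : SimpleGraph V → List (V × V) → Prop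
  | _, [] => True
  | H, e :: l => NewCopyStep F H e.1 e.2 ∧
      SatProcess F (H ⊔ SimpleGraph.fromEdgeSet {s(e.1, e.2)}) l

/-- The graph obtained from `H` by adding all edges in the list `l`. -/
def addEdges {V : Type*} (H : SimpleGraph V) (l : List (V × V)) : SimpleGraph V :=
  H ⊔ SimpleGraph.fromEdgeSet {e | ∃ p ∈ l, e = s(p.1, p.2)}

/-- `H` is weakly `(G, F)`-saturated. -/
def WeaklySaturated {W V : Type*} (G : SimpleGraph V) (F : SimpleGraph W)
    (H : SimpleGraph V) : Prop :=
  H ≤ G ∧ ¬ HasCopy F H ∧ ∃ l : List (V × V), SatProcess F H l ∧ addEdges H l = G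

/-- The weak saturation number `wsat(G, F)`. -/
noncomputable def wsat {W V : Type*} (G : SimpleGraph V) (F : SimpleGraph W) : ℕ :=
  sInf {m | ∃ H, WeaklySaturated G F H ∧ H.edgeSet.ncard = m}

/-- `F = K_3 ∪ D_3` on 9 vertices: a triangle on `{0,1,2}`, and `D_3` on `{3,…,8}`
(triangles `{3,4,5}` and `{6,7,8}` joined by the edge `56`). -/
def K3UnionD3 : SimpleGraph (Fin 9) :=
  SimpleGraph.fromRel (fun x y => ((x : ℕ), (y : ℕ)) ∈
    [(0,1), (0,2), (1,2), (3,4), (3,5), (4,5), (5,6), (6,7), (6,8), (7,8)])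

/-- The graph `D_3 ∪ ((n-6)/3)·P_3` on `Fin n`: a copy of `D_3` on the vertices
`{0,…,5}` (triangles `{0,1,2}` and `{3,4,5}` joined by the edge `23`), and a path
on the three vertices `{3i+6, 3i+7, 3i+8}` for each `i`. -/
def D3UnionPaths (n : ℕ) : SimpleGraph (Fin n) :=
  SimpleGraph.fromRel (fun x y =>
    (((x : ℕ), (y : ℕ)) ∈ [(0,1), (0,2), (1,2), (3,4), (3,5), (4,5), (2,3)]) ∨
    (6 ≤ (x : ℕ) ∧ 6 ≤ (y : ℕ) ∧ (x : ℕ) / 3 = (y : ℕ) / 3 ∧ (x : ℕ) + 1 = (y : ℕ)))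

/-!
Split `Fin n` into the blocks `{3k, 3k+1, 3k+2}`. Every triangle of `D3UnionPaths n` lies in
the `D_3` on `{0,…,5}`, which is too small for the three disjoint triangles of `K_3 ∪ D_3`.
Saturation runs in two rounds. First each path `3k, 3k+1, 3k+2` with `k ≥ 2` is closed to a
triangle, which forms a new copy of `F` with the `D_3`. Then every block is a triangle, and a
missing edge `xy` between two blocks is the bridge of a `D_3` built on the blocks of `x` and `y`,
while one of the first three blocks, avoiding both, supplies the `K_3`.
-/

variable {V W : Type*}

theorem K3UnionD3_adj_block_or_bridge {c d : Fin 9} (h : K3UnionD3.Adj c d) :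
    (c : ℕ) / 3 = d / 3 ∨ s(c, d) = s(5, 6) := by
  revert c d
  simp only [K3UnionD3, fromRel_adj]
  decide

theorem K3UnionD3_exists_triangle (c : Fin 9) :
    ∃ d e, K3UnionD3.Adj c d ∧ K3UnionD3.Adj d e ∧ K3UnionD3.Adj c e := by
  revert c
  simp only [K3UnionD3, fromRel_adj]
  decide

theorem mem_D3_edgeList_iff {a b : ℕ} :
    (a, b) ∈ [(0,1), (0,2), (1,2), (3,4), (3,5), (4,5), (2,3)] ↔
      a < b ∧ b < 6 ∧ (a / 3 = b / 3 ∨ a = 2 ∧ b = 3) := by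
  constructor
  · simp only [List.mem_cons, Prod.mk.injEq, List.not_mem_nil, or_false]
    omega
  · rintro ⟨hab, hb, h⟩
    interval_cases b <;> interval_cases a <;> simp_all

theorem D3UnionPaths_adj {n : ℕ} {x y : Fin n} :
    (D3UnionPaths n).Adj x y ↔ (x : ℕ) ≠ y ∧
      (((x : ℕ) / 3 = y / 3 ∧ ((x : ℕ) < 6 ∨ (x : ℕ) + 1 = y ∨ (y : ℕ) + 1 = x)) ∨
        ((x : ℕ) = 2 ∧ (y : ℕ) = 3) ∨ ((x : ℕ) = 3 ∧ (y : ℕ) = 2)) := by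
  simp only [D3UnionPaths, fromRel_adj, ne_eq, Fin.ext_iff, mem_D3_edgeList_iff]
  omega

theorem addEdges_adj {H : SimpleGraph V} {l : List (V × V)} {x y : V} :
    (addEdges H l).Adj x y ↔ H.Adj x y ∨ (x ≠ y ∧ ∃ q ∈ l, s(x, y) = s(q.1, q.2)) := by
  simp only [addEdges, sup_adj, fromEdgeSet_adj, Set.mem_ofPred_eq]
  aesop

theorem le_addEdges (H : SimpleGraph V) (l : List (V × V)) : H ≤ addEdges H l :=
  le_sup_left

theorem addEdges_nil (H : SimpleGraph V) : addEdges H [] = H := by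
  simp [addEdges]

theorem addEdges_cons (H : SimpleGraph V) (e : V × V) (l : List (V × V)) :
    addEdges H (e :: l) = addEdges (H ⊔ fromEdgeSet {s(e.1, e.2)}) l := by
  ext x y
  simp only [addEdges_adj, sup_adj, fromEdgeSet_adj, List.mem_cons]
  aesop

theorem addEdges_append (H : SimpleGraph V) (l₁ l₂ : List (V × V)) :
    addEdges H (l₁ ++ l₂) = addEdges (addEdges H l₁) l₂ := by
  ext x y
  simp only [addEdges_adj, List.mem_append]
  aesop

/-- `NewCopyStep F H x y` unfolds to `¬ H.Adj x y ∧ HasCopyThrough F (H ⊔ xy) x y`. -/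
def HasCopyThrough (F : SimpleGraph W) (G : SimpleGraph V) (x y : V) : Prop :=
  ∃ f : W ↪ V, ∃ a b : W, F.Adj a b ∧ f a = x ∧ f b = y ∧
    ∀ c d, F.Adj c d → G.Adj (f c) (f d)

theorem HasCopyThrough.mono {F : SimpleGraph W} {G G' : SimpleGraph V} {x y : V}
    (hG : G ≤ G') : HasCopyThrough F G x y → HasCopyThrough F G' x y := by
  rintro ⟨f, a, b, hab, ha, hb, hf⟩
  exact ⟨f, a, b, hab, ha, hb, fun c d hcd => hG (hf c d hcd)⟩

theorem satProcess_append {F : SimpleGraph W} {H : SimpleGraph V} {l₁ l₂ : List (V × V)} :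
    SatProcess F H (l₁ ++ l₂) ↔ SatProcess F H l₁ ∧ SatProcess F (addEdges H l₁) l₂ := by
  induction l₁ generalizing H with
  | nil => simp [SatProcess, addEdges_nil]
  | cons e l ih => simp only [List.cons_append, SatProcess, ih, addEdges_cons, and_assoc]

theorem satProcess_of_pairwise {F : SimpleGraph W} {H : SimpleGraph V} {l : List (V × V)}
    (hl : l.Pairwise fun e e' => s(e.1, e.2) ≠ s(e'.1, e'.2))
    (hH : ∀ e ∈ l, ¬ H.Adj e.1 e.2)
    (hF : ∀ e ∈ l, HasCopyThrough F (H ⊔ fromEdgeSet {s(e.1, e.2)}) e.1 e.2) :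
    SatProcess F H l := by
  induction l generalizing H with
  | nil => trivial
  | cons e l ih =>
    rw [List.pairwise_cons] at hl
    refine ⟨⟨hH e List.mem_cons_self, hF e List.mem_cons_self⟩,
      ih hl.2 (fun e' he' => ?_) (fun e' he' => ?_)⟩
    · simp only [sup_adj, fromEdgeSet_adj, Set.mem_singleton_iff, not_or, not_and]
      exact ⟨hH e' (List.mem_cons_of_mem _ he'), fun h => absurd h.symm (hl.1 e' he')⟩
    · exact (hF e' (List.mem_cons_of_mem _ he')).mono (sup_le_sup_right le_sup_left _)

theorem pairwise_sym2_ne_toList [LinearOrder V] {P : Finset (V × V)}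
    (hP : ∀ p ∈ P, p.1 < p.2) :
    P.toList.Pairwise fun e e' => s(e.1, e.2) ≠ s(e'.1, e'.2) := by
  refine P.nodup_toList.pairwise_of_forall_ne fun e he e' he' hne heq => ?_
  rw [Finset.mem_toList] at he he'
  rcases Sym2.eq_iff.mp heq with ⟨h₁, h₂⟩ | ⟨h₁, h₂⟩
  · exact hne (Prod.ext h₁ h₂)
  · exact lt_asymm (hP e he) (h₁ ▸ h₂ ▸ hP e' he')

theorem hasCopyThrough_K3UnionD3 {G : SimpleGraph V} (f : Fin 9 ↪ V)
    (hblock : ∀ c d : Fin 9, c ≠ d → (c : ℕ) / 3 = d / 3 → G.Adj (f c) (f d))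
    (hbridge : G.Adj (f 5) (f 6)) {a b : Fin 9} (hab : K3UnionD3.Adj a b) {x y : V}
    (ha : f a = x) (hb : f b = y) : HasCopyThrough K3UnionD3 G x y := by
  refine ⟨f, a, b, hab, ha, hb, fun c d hcd => ?_⟩
  rcases K3UnionD3_adj_block_or_bridge hcd with h | h
  · exact hblock c d hcd.ne h
  · rcases Sym2.eq_iff.mp h with ⟨rfl, rfl⟩ | ⟨rfl, rfl⟩
    exacts [hbridge, hbridge.symm]

/-- Block `i` of `Fin 9` (the vertices `3i, 3i+1, 3i+2`) goes onto block `b i` of `Fin n`,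
cyclically shifted by `r i`. -/
def blockEmbedding {n : ℕ} (b r : Fin 3 → ℕ) (hb : Function.Injective b)
    (hbn : ∀ i, b i < n / 3) : Fin 9 ↪ Fin n where
  toFun c := ⟨3 * b ⟨c / 3, by omega⟩ + (r ⟨c / 3, by omega⟩ + c) % 3, by
    have := hbn ⟨c / 3, by omega⟩
    omega⟩
  inj' c d h := by
    simp only [Fin.mk.injEq] at h
    have hcd : (⟨c / 3, by omega⟩ : Fin 3) = ⟨d / 3, by omega⟩ := hb (by omega)
    rw [hcd] at h
    rw [Fin.mk.injEq] at hcd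
    ext
    omega

section blockEmbedding

variable {n : ℕ} {b r : Fin 3 → ℕ} {hb : Function.Injective b} {hbn : ∀ i, b i < n / 3}

theorem blockEmbedding_val (c : Fin 9) :
    (blockEmbedding b r hb hbn c : ℕ) = 3 * b ⟨c / 3, by omega⟩ + (r ⟨c / 3, by omega⟩ + c) % 3 :=
  rfl

theorem blockEmbedding_adj {G : SimpleGraph (Fin n)}
    (hG : ∀ i (u w : Fin n), u ≠ w → (u : ℕ) / 3 = b i → (w : ℕ) / 3 = b i → G.Adj u w)
    {c d : Fin 9} (hcd : c ≠ d) (hdiv : (c : ℕ) / 3 = d / 3) :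
    G.Adj (blockEmbedding b r hb hbn c) (blockEmbedding b r hb hbn d) := by
  refine hG ⟨c / 3, by omega⟩ _ _ ((blockEmbedding b r hb hbn).injective.ne hcd) ?_ ?_
  · rw [blockEmbedding_val]; omega
  · have : (⟨d / 3, by omega⟩ : Fin 3) = ⟨c / 3, by omega⟩ := Fin.ext hdiv.symm
    rw [blockEmbedding_val, this]; omega

end blockEmbedding

theorem injective_vecThree {α : Type*} {a b c : α} (hab : a ≠ b) (hac : a ≠ c) (hbc : b ≠ c) :
    Function.Injective ![a, b, c] := by
  intro i j h
  fin_cases i <;> fin_cases j <;> simp_all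

theorem hasCopyThrough_pathClosingEdge {n : ℕ} {x y : Fin n} (hx : 6 ≤ (x : ℕ))
    (hx3 : (x : ℕ) % 3 = 0) (hy : (y : ℕ) = x + 2) :
    HasCopyThrough K3UnionD3 (D3UnionPaths n ⊔ fromEdgeSet {s(x, y)}) x y := by
  have hb : Function.Injective ![(x : ℕ) / 3, 0, 1] :=
    injective_vecThree (by omega) (by omega) one_ne_zero.symm
  have hbn : ∀ i, ![(x : ℕ) / 3, 0, 1] i < n / 3 := by
    have := y.isLt
    intro i
    fin_cases i <;> simp only [Fin.zero_eta, Fin.mk_one, Fin.reduceFinMk, Fin.isValue,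
      Matrix.cons_val_zero, Matrix.cons_val_one, Matrix.cons_val] <;> omega
  refine hasCopyThrough_K3UnionD3 (blockEmbedding _ (fun _ => 0) hb hbn)
    (fun c d => blockEmbedding_adj fun i u w huw hu hw => ?_) ?_ (a := 0) (b := 2)
    (by simp [K3UnionD3]) (Fin.ext (show 3 * ((x : ℕ) / 3) + (0 + 0) % 3 = x by omega))
    (Fin.ext (show 3 * ((x : ℕ) / 3) + (0 + 2) % 3 = y by omega))
  · simp only [sup_adj, fromEdgeSet_adj, Set.mem_singleton_iff, Sym2.eq_iff, D3UnionPaths_adj,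
      Fin.ext_iff]
    fin_cases i <;> simp only [Fin.zero_eta, Fin.mk_one, Fin.reduceFinMk, Fin.isValue,
      Matrix.cons_val_zero, Matrix.cons_val_one, Matrix.cons_val] at hu hw <;> omega
  · simp [D3UnionPaths_adj, blockEmbedding_val]

theorem exists_lt_three_ne_ne (a b : ℕ) : ∃ m < 3, m ≠ a ∧ m ≠ b := by
  by_contra! h
  have := h 0 (by norm_num)
  have := h 1 (by norm_num)
  have := h 2 (by norm_num)
  omega

theorem hasCopyThrough_crossEdge {n : ℕ} (h3 : n % 3 = 0) (hn : 9 ≤ n)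
    {G : SimpleGraph (Fin n)} (hG : ∀ u w : Fin n, u ≠ w → (u : ℕ) / 3 = w / 3 → G.Adj u w)
    {x y : Fin n} (hxy : (x : ℕ) / 3 ≠ y / 3) :
    HasCopyThrough K3UnionD3 (G ⊔ fromEdgeSet {s(x, y)}) x y := by
  obtain ⟨m, hm, hmx, hmy⟩ := exists_lt_three_ne_ne ((x : ℕ) / 3) ((y : ℕ) / 3)
  have hbn : ∀ i, ![m, (x : ℕ) / 3, (y : ℕ) / 3] i < n / 3 := by
    have := x.isLt
    have := y.isLt
    intro i
    fin_cases i <;> simp only [Fin.zero_eta, Fin.mk_one, Fin.reduceFinMk, Fin.isValue,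
      Matrix.cons_val_zero, Matrix.cons_val_one, Matrix.cons_val] <;> omega
  set f := blockEmbedding _ ![0, (x : ℕ) + 1, y] (injective_vecThree hmx hmy hxy) hbn
  have hf5 : f 5 = x := Fin.ext (show 3 * ((x : ℕ) / 3) + (x + 1 + 5) % 3 = x by omega)
  have hf6 : f 6 = y := Fin.ext (show 3 * ((y : ℕ) / 3) + (y + 6) % 3 = y by omega)
  refine hasCopyThrough_K3UnionD3 f (fun c d => blockEmbedding_adj fun i u w huw hu hw =>
    le_sup_left (a := G) (hG u w huw (hu.trans hw.symm))) ?_ (by simp [K3UnionD3]) hf5 hf6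
  rw [hf5, hf6]
  simp only [sup_adj, fromEdgeSet_adj, Set.mem_singleton_iff, true_and]
  exact Or.inr fun h => hxy (congrArg (fun v : Fin n => (v : ℕ) / 3) h)

noncomputable def pathClosingEdges (n : ℕ) : List (Fin n × Fin n) :=
  (Finset.univ.filter fun p : Fin n × Fin n =>
    6 ≤ (p.1 : ℕ) ∧ (p.1 : ℕ) % 3 = 0 ∧ (p.2 : ℕ) = p.1 + 2).toList

noncomputable def crossBlockEdges (n : ℕ) : List (Fin n × Fin n) :=
  (Finset.univ.filter fun p : Fin n × Fin n =>
    p.1 < p.2 ∧ (p.1 : ℕ) / 3 ≠ p.2 / 3 ∧ ¬((p.1 : ℕ) = 2 ∧ (p.2 : ℕ) = 3)).toList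

theorem mem_pathClosingEdges {n : ℕ} {e : Fin n × Fin n} :
    e ∈ pathClosingEdges n ↔ 6 ≤ (e.1 : ℕ) ∧ (e.1 : ℕ) % 3 = 0 ∧ (e.2 : ℕ) = e.1 + 2 := by
  simp [pathClosingEdges]

theorem mem_crossBlockEdges {n : ℕ} {e : Fin n × Fin n} :
    e ∈ crossBlockEdges n ↔
      e.1 < e.2 ∧ (e.1 : ℕ) / 3 ≠ e.2 / 3 ∧ ¬((e.1 : ℕ) = 2 ∧ (e.2 : ℕ) = 3) := by
  simp [crossBlockEdges]

theorem satProcess_pathClosingEdges (n : ℕ) :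
    SatProcess K3UnionD3 (D3UnionPaths n) (pathClosingEdges n) := by
  refine satProcess_of_pairwise (pairwise_sym2_ne_toList fun p hp => ?_) (fun e he => ?_)
    (fun e he => ?_)
  · simp only [Finset.mem_filter] at hp
    rw [Fin.lt_def]
    omega
  · rw [mem_pathClosingEdges] at he
    rw [D3UnionPaths_adj]
    omega
  · rw [mem_pathClosingEdges] at he
    exact hasCopyThrough_pathClosingEdge he.1 he.2.1 he.2.2

theorem addEdges_pathClosingEdges_adj {n : ℕ} {u w : Fin n} (huw : u ≠ w)
    (hdiv : (u : ℕ) / 3 = w / 3) : (addEdges (D3UnionPaths n) (pathClosingEdges n)).Adj u w := by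
  rw [addEdges_adj]
  by_cases hH : (D3UnionPaths n).Adj u w
  · exact Or.inl hH
  rw [D3UnionPaths_adj] at hH
  refine Or.inr ⟨huw, ?_⟩
  rcases lt_or_gt_of_ne huw with h | h <;> rw [Fin.lt_def] at h
  · exact ⟨(u, w), mem_pathClosingEdges.mpr (by dsimp only; omega), rfl⟩
  · exact ⟨(w, u), mem_pathClosingEdges.mpr (by dsimp only; omega), Sym2.eq_swap⟩

theorem satProcess_crossBlockEdges {n : ℕ} (h3 : n % 3 = 0) (hn : 9 ≤ n) :
    SatProcess K3UnionD3 (addEdges (D3UnionPaths n) (pathClosingEdges n)) (crossBlockEdges n) := by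
  refine satProcess_of_pairwise (pairwise_sym2_ne_toList fun p hp => ?_) (fun e he => ?_)
    (fun e he => ?_)
  · simp only [Finset.mem_filter] at hp
    exact hp.2.1
  · rw [mem_crossBlockEdges, Fin.lt_def] at he
    rw [addEdges_adj, D3UnionPaths_adj]
    rintro (h | ⟨-, q, hq, hsym⟩)
    · omega
    · rw [mem_pathClosingEdges] at hq
      rcases Sym2.eq_iff.mp hsym with ⟨h₁, h₂⟩ | ⟨h₁, h₂⟩ <;> rw [h₁, h₂] at he <;> omega
  · exact hasCopyThrough_crossEdge h3 hn (fun u w => addEdges_pathClosingEdges_adj)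
      (mem_crossBlockEdges.mp he).2.1

theorem addEdges_crossBlockEdges_eq_top (n : ℕ) :
    addEdges (addEdges (D3UnionPaths n) (pathClosingEdges n)) (crossBlockEdges n) = ⊤ := by
  ext u w
  refine ⟨fun h => h.ne, fun huw => ?_⟩
  rw [addEdges_adj]
  by_cases hdiv : (u : ℕ) / 3 = w / 3
  · exact Or.inl (addEdges_pathClosingEdges_adj huw hdiv)
  by_cases h23 : (D3UnionPaths n).Adj u w
  · exact Or.inl (le_addEdges _ _ h23)
  rw [D3UnionPaths_adj] at h23
  refine Or.inr ⟨huw, ?_⟩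
  rcases lt_or_gt_of_ne huw with h | h
  · have := Fin.lt_def.mp h
    exact ⟨(u, w), mem_crossBlockEdges.mpr ⟨h, hdiv, by dsimp only; omega⟩, rfl⟩
  · have := Fin.lt_def.mp h
    exact ⟨(w, u), mem_crossBlockEdges.mpr ⟨h, by dsimp only; omega, by dsimp only; omega⟩,
      Sym2.eq_swap⟩

theorem D3UnionPaths_triangle_lt_six {n : ℕ} {x y z : Fin n} (hxy : (D3UnionPaths n).Adj x y)
    (hyz : (D3UnionPaths n).Adj y z) (hxz : (D3UnionPaths n).Adj x z) : (x : ℕ) < 6 := by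
  rw [D3UnionPaths_adj] at hxy hyz hxz
  omega

theorem D3UnionPaths_not_hasCopy (n : ℕ) : ¬ HasCopy K3UnionD3 (D3UnionPaths n) := by
  rintro ⟨f, hf⟩
  have hlt (c : Fin 9) : (f c : ℕ) < 6 := by
    obtain ⟨d, e, hcd, hde, hce⟩ := K3UnionD3_exists_triangle c
    exact D3UnionPaths_triangle_lt_six (hf c d hcd) (hf d e hde) (hf c e hce)
  have := Fintype.card_le_of_injective (fun c => (⟨f c, hlt c⟩ : Fin 6))
    fun c d h => f.injective (Fin.ext (Fin.mk.inj_iff.mp h))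
  simp at this

theorem weaklySaturated_D3UnionPaths {n : ℕ} (h3 : n % 3 = 0) (hn : 9 ≤ n) :
    WeaklySaturated ⊤ K3UnionD3 (D3UnionPaths n) :=
  ⟨le_top, D3UnionPaths_not_hasCopy n, pathClosingEdges n ++ crossBlockEdges n,
    satProcess_append.mpr ⟨satProcess_pathClosingEdges n, satProcess_crossBlockEdges h3 hn⟩,
    (addEdges_append _ _ _).trans (addEdges_crossBlockEdges_eq_top n)⟩

theorem ncard_edgeSet_D3UnionPaths_le {n : ℕ} (h3 : n % 3 = 0) :
    (D3UnionPaths n).edgeSet.ncard ≤ 7 + 2 * (n / 3 - 2) := by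
  set blocks := Finset.Ico 2 (n / 3)
  set S : Finset (Sym2 ℕ) :=
    (([(0,1), (0,2), (1,2), (3,4), (3,5), (4,5), (2,3)].map fun p => s(p.1, p.2)).toFinset ∪
      blocks.image fun k => s(3 * k, 3 * k + 1)) ∪ blocks.image fun k => s(3 * k + 1, 3 * k + 2)
  have hS {u w : Fin n} (h : (D3UnionPaths n).Adj u w) (huw : (u : ℕ) < w) :
      s((u : ℕ), (w : ℕ)) ∈ S := by
    have := w.isLt
    rw [D3UnionPaths_adj] at h
    simp only [S, Finset.mem_union, List.mem_toFinset, List.mem_map, Finset.mem_image,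
      Finset.mem_Ico, blocks]
    by_cases hw : (w : ℕ) < 6
    · exact Or.inl (Or.inl ⟨((u : ℕ), (w : ℕ)), mem_D3_edgeList_iff.mpr (by omega), rfl⟩)
    rcases Nat.lt_or_ge ((u : ℕ) % 3) 1 with hu | hu
    · exact Or.inl (Or.inr ⟨u / 3, by omega, Sym2.eq_iff.mpr (Or.inl ⟨by omega, by omega⟩)⟩)
    · exact Or.inr ⟨u / 3, by omega, Sym2.eq_iff.mpr (Or.inl ⟨by omega, by omega⟩)⟩
  have hsub : Sym2.map Fin.val '' (D3UnionPaths n).edgeSet ⊆ S := by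
    rintro _ ⟨e, he, rfl⟩
    induction e using Sym2.inductionOn with | _ u w => ?_
    rw [mem_edgeSet] at he
    rcases lt_or_gt_of_ne he.ne with h | h
    · exact hS he h
    · rw [Sym2.map_mk, Sym2.eq_swap]
      exact hS he.symm h
  calc (D3UnionPaths n).edgeSet.ncard
      = (Sym2.map Fin.val '' (D3UnionPaths n).edgeSet).ncard :=
        (Set.ncard_image_of_injective _ (Sym2.map.injective Fin.val_injective)).symm
    _ ≤ S.card := by simpa using Set.ncard_le_ncard hsub S.finite_toSet
    _ ≤ 7 + (n / 3 - 2) + (n / 3 - 2) := by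
        refine (Finset.card_union_le _ _).trans (add_le_add ((Finset.card_union_le _ _).trans
          (add_le_add (List.toFinset_card_le _) ?_)) ?_) <;>
        exact Finset.card_image_le.trans (by simp [blocks])
    _ = 7 + 2 * (n / 3 - 2) := by ring

/-- for `n ≥ 15` with `3 ∣ n`, the graph `D_3 ∪ ((n-6)/3)·P_3` is weakly
`(K_n, K_3 ∪ D_3)`-saturated, whence `wsat(K_n, K_3 ∪ D_3) ≤ 2n/3 + 3`. -/
theorem stmt6 {n : ℕ} (hn : 15 ≤ n) (h3 : n % 3 = 0) :
    WeaklySaturated (⊤ : SimpleGraph (Fin n)) K3UnionD3 (D3UnionPaths n) ∧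
    wsat (⊤ : SimpleGraph (Fin n)) K3UnionD3 ≤ 2 * n / 3 + 3 := by
  have hsat := weaklySaturated_D3UnionPaths h3 (by omega)
  refine ⟨hsat, (Nat.sInf_le ⟨_, hsat, rfl⟩ : wsat _ _ ≤ _).trans ?_⟩
  have := ncard_edgeSet_D3UnionPaths_le h3
  omega
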